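/- If T and U are regular tableaux on [n] = {1, …, n} with T_{{1,2,3}} = U_{{1,2,3}}, then T = U. -/

import Mathlib

noncomputable section

/-- A tableau on the finite set `A ⊂ ℕ`: a family of rows, where the row of `i ∈ A`
is a word on `A \ {i}`, and rows of indices outside `A` are empty. -/
def IsTableau (A : Finset ℕ) (T : ℕ → List ℕ) : Prop :=
  (∀ i ∈ A, ∀ x ∈ T i, x ∈ A ∧ x ≠ i) ∧ ∀ i, i ∉ A → T i = []

/-- The restriction of a tableau to `X`: keep only the rows indexed by `X` and in each
of them only the letters belonging to `X`. -/
def restrictTab (X : Finset ℕ) (T : ℕ → List ℕ) : ℕ → List ℕ :=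
  fun i => if i ∈ X then (T i).filter (· ∈ X) else []

/-- The (1-based) rank of `a` in the finite set `A`. -/
def rankIn (A : Finset ℕ) (a : ℕ) : ℕ := (A.filter (· ≤ a)).card

/-- Order equivalence of a tableau on `X` with a tableau on `Y`: they have the same
normal form after replacing every letter by its rank, rows being matched according to
the increasing enumerations of `X` and `Y`. -/
def TabEquiv (X Y : Finset ℕ) (T U : ℕ → List ℕ) : Prop :=
  X.card = Y.card ∧ ∀ j < X.card,
    ((T ((Finset.sort X (· ≤ ·)).getD j 0)).map (rankIn X)) =
    ((U ((Finset.sort Y (· ≤ ·)).getD j 0)).map (rankIn Y))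

/-- A regular tableau on `A`: `|A| ≥ 4` and all restrictions to 3-element subsets are
order equivalent. -/
def IsRegularTableau (A : Finset ℕ) (T : ℕ → List ℕ) : Prop :=
  IsTableau A T ∧ 4 ≤ A.card ∧
    ∀ X Y : Finset ℕ, X ⊆ A → Y ⊆ A → X.card = 3 → Y.card = 3 →
      TabEquiv X Y (restrictTab X T) (restrictTab Y T)

/-- A tableau on `A` is pangrammatic if every element of `A` occurs in some row. -/
def Pangrammatic (A : Finset ℕ) (T : ℕ → List ℕ) : Prop :=
  ∀ a ∈ A, ∃ i ∈ A, a ∈ T i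

/-! ### Balanced blocks on the four-letter alphabet `a ≺ b ≺ c ≺ d`, encoded as
`0 ≺ 1 ≺ 2 ≺ 3` in `Fin 4`. -/

/-- A (formal) balanced block on the alphabet `{a ≺ b ≺ c ≺ d}`. -/
inductive Blk : Type
  | ab (r : ℕ) | ba (r : ℕ) | cd (r : ℕ) | dc (r : ℕ)
deriving DecidableEq

/-- The size parameter of a block. -/
def Blk.r : Blk → ℕ
  | .ab r => r | .ba r => r | .cd r => r | .dc r => r

/-- Whether a block is on the letters `{c, d}`. -/
def Blk.isCD : Blk → Prop
  | .cd _ => True | .dc _ => True | _ => False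

/-- The word of a block: `a^r b^r`, `b^r a^r`, `c^r d^r` or `d^r c^r`. -/
def Blk.word : Blk → List (Fin 4)
  | .ab r => List.replicate r 0 ++ List.replicate r 1
  | .ba r => List.replicate r 1 ++ List.replicate r 0
  | .cd r => List.replicate r 2 ++ List.replicate r 3
  | .dc r => List.replicate r 3 ++ List.replicate r 2

/-- All blocks in the list have size at least 1. -/
def GoodList (L : List Blk) : Prop := ∀ b ∈ L, 0 < b.r

/-- The word obtained by concatenating the words of the blocks in `L`. -/
def wordOf (L : List Blk) : List (Fin 4) := (L.map Blk.word).flatten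

/-- The language `B*_(ab,cd)` of concatenations of balanced blocks. -/
def InBStar (w : List (Fin 4)) : Prop := ∃ L : List Blk, GoodList L ∧ wordOf L = w

/-- The language `W_(ab,cd)`: words of `B*_(ab,cd)` containing a letter from `{a,b}`
and a letter from `{c,d}`. -/
def InW (w : List (Fin 4)) : Prop :=
  InBStar w ∧ (∃ x ∈ w, x = (0 : Fin 4) ∨ x = (1 : Fin 4)) ∧
    (∃ x ∈ w, x = (2 : Fin 4) ∨ x = (3 : Fin 4))

/-- The contribution of one block to row `i` of the tableau `T^ω_n = φ_n(ω)`. -/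
def phiRow (n i : ℕ) : Blk → List ℕ
  | .ab r => if 1 < i then ((List.range (i - 1)).map fun j => List.replicate r (j + 1)).flatten else []
  | .ba r => if 1 < i then ((List.range (i - 1)).map fun j => List.replicate r (i - 1 - j)).flatten else []
  | .cd r => if i < n then ((List.range (n - i)).map fun j => List.replicate r (i + 1 + j)).flatten else []
  | .dc r => if i < n then ((List.range (n - i)).map fun j => List.replicate r (n - j)).flatten else []

/-- The tableau `T^ω_n = φ_n(ω)` on `[n]`, for the word `ω` given by the block
decomposition `L`. -/
def phiTab (n : ℕ) (L : List Blk) : ℕ → List ℕ :=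
  fun i => if 1 ≤ i ∧ i ≤ n then (L.map (phiRow n i)).flatten else []

/-- A word of `W_(ab,cd)` is well-balanced if it has a prefix in `B*_(ab,cd)` with an
even number of `a`'s and an odd number of `c`'s, and also a prefix in `B*_(ab,cd)`
with an odd number of `a`'s and an even number of `c`'s. -/
def WellBalanced (w : List (Fin 4)) : Prop :=
  (∃ u v : List (Fin 4), w = u ++ v ∧ InBStar u ∧
      Even (u.count (0 : Fin 4)) ∧ Odd (u.count (2 : Fin 4))) ∧
  (∃ u v : List (Fin 4), w = u ++ v ∧ InBStar u ∧
      Odd (u.count (0 : Fin 4)) ∧ Even (u.count (2 : Fin 4)))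

/-! ### Valid matchings -/

/-- In a tableau, `{j, k}` is weakly adjacent when row `j` starts with `k` and
row `k` starts with `j`. -/
def WeaklyAdj (T : ℕ → List ℕ) (j k : ℕ) : Prop :=
  (T j).head? = some k ∧ (T k).head? = some j

/-- Delete the first entries of rows `j` and `k`. -/
def deletePair (T : ℕ → List ℕ) (j k : ℕ) : ℕ → List ℕ :=
  fun i => if i = j ∨ i = k then (T i).tail else T i

/-- The deterministic matching process: while some row is nonempty, delete the first
entries of the rows of the lexicographically least weakly adjacent pair; `ValidRun T`
holds when the process terminates with all rows empty. -/
inductive ValidRun : (ℕ → List ℕ) → Prop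
  | done (T : ℕ → List ℕ) (h : ∀ i, T i = []) : ValidRun T
  | step (T : ℕ → List ℕ) (j k : ℕ) (hjk : j < k) (hadj : WeaklyAdj T j k)
      (hmin : ∀ j' k' : ℕ, j' < k' → WeaklyAdj T j' k' → (j < j' ∨ (j = j' ∧ k ≤ k')))
      (h : ValidRun (deletePair T j k)) : ValidRun T


/-! Regularity makes every 3-element restriction of `T` order equivalent to the one on
`{1, 2, 3}`, and order equivalence to a common tableau pins a restriction down because ranks
are injective; hence `T` and `U` have the same restrictions to all triples. A row `T i` is a
word on `[n] \ {i}`, determined by its subwords on the pairs `{x, y}`, and these are the rows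
of `i` in the restrictions to the triples `{i, x, y}`. -/

lemma rankIn_lt_rankIn {X : Finset ℕ} {a b : ℕ} (hb : b ∈ X) (hab : a < b) :
    rankIn X a < rankIn X b :=
  Finset.card_lt_card ⟨Finset.monotone_filter_right X fun _ _ hx => hx.trans hab.le,
    fun hsub => absurd (Finset.mem_filter.1 (hsub (Finset.mem_filter.2 ⟨hb, le_rfl⟩))).2
      (not_le.2 hab)⟩

lemma rankIn_injOn (X : Finset ℕ) : Set.InjOn (rankIn X) X := by
  intro a ha b hb h
  by_contra hne
  rcases Nat.lt_or_gt_of_ne hne with hab | hba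
  · exact (rankIn_lt_rankIn hb hab).ne h
  · exact (rankIn_lt_rankIn ha hba).ne' h

lemma List.eq_of_map_eq_of_injOn {α β : Type*} {f : α → β} {s : Set α} (hf : Set.InjOn f s) :
    ∀ {l l' : List α}, (∀ a ∈ l, a ∈ s) → (∀ a ∈ l', a ∈ s) → l.map f = l'.map f → l = l'
  | [], [], _, _, _ => rfl
  | a :: l, b :: l', hl, hl', h => by
    simp only [List.map_cons, List.cons.injEq] at h
    rw [hf (hl a List.mem_cons_self) (hl' b List.mem_cons_self) h.1,
      List.eq_of_map_eq_of_injOn hf (fun x hx => hl x (List.mem_cons_of_mem a hx))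
        (fun x hx => hl' x (List.mem_cons_of_mem b hx)) h.2]

lemma mem_of_mem_restrictTab {X : Finset ℕ} {T : ℕ → List ℕ} {i a : ℕ}
    (ha : a ∈ restrictTab X T i) : a ∈ X := by
  unfold restrictTab at ha
  split_ifs at ha
  · exact of_decide_eq_true (List.mem_filter.1 ha).2
  · simp at ha

lemma exists_getD_sort_eq {X : Finset ℕ} {i : ℕ} (hi : i ∈ X) :
    ∃ j < X.card, (X.sort (· ≤ ·)).getD j 0 = i := by
  obtain ⟨j, hj, hget⟩ := List.mem_iff_getElem.1 ((Finset.mem_sort (· ≤ ·)).2 hi)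
  refine ⟨j, by simpa using hj, ?_⟩
  rw [List.getD_eq_getElem _ _ hj, hget]

lemma restrictTab_eq_of_tabEquiv {X Y : Finset ℕ} {T U V : ℕ → List ℕ}
    (hT : TabEquiv X Y (restrictTab X T) V) (hU : TabEquiv X Y (restrictTab X U) V) :
    restrictTab X T = restrictTab X U := by
  funext i
  by_cases hi : i ∈ X
  · obtain ⟨j, hj, rfl⟩ := exists_getD_sort_eq hi
    exact List.eq_of_map_eq_of_injOn (rankIn_injOn X) (fun _ => mem_of_mem_restrictTab)
      (fun _ => mem_of_mem_restrictTab) ((hT.2 j hj).trans (hU.2 j hj).symm)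
  · simp [restrictTab, hi]

section PairFilters

variable {α : Type*} [DecidableEq α] {A : Finset α}

lemma List.eq_nil_of_forall_filter_pair_eq_nil (hA : 2 ≤ A.card) {w : List α}
    (hw : ∀ a ∈ w, a ∈ A)
    (h : ∀ x ∈ A, ∀ y ∈ A, x ≠ y → w.filter (· ∈ ({x, y} : Finset α)) = []) : w = [] := by
  refine List.eq_nil_iff_forall_not_mem.2 fun a ha => ?_
  obtain ⟨y, hy, hya⟩ := Finset.exists_mem_ne hA a
  have := List.filter_eq_nil_iff.1 (h a (hw a ha) y hy hya.symm) a ha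
  simp at this

/-- Two distinct heads would already differ in the restriction to the pair they form. -/
lemma List.eq_of_forall_filter_pair_eq (hA : 2 ≤ A.card) :
    ∀ {w w' : List α}, (∀ a ∈ w, a ∈ A) → (∀ a ∈ w', a ∈ A) →
      (∀ x ∈ A, ∀ y ∈ A, x ≠ y →
        w.filter (· ∈ ({x, y} : Finset α)) = w'.filter (· ∈ ({x, y} : Finset α))) →
      w = w'
  | [], w', _, hw', h =>
    (List.eq_nil_of_forall_filter_pair_eq_nil hA hw' fun x hx y hy hxy =>
      (h x hx y hy hxy).symm).symm
  | w, [], hw, _, h => List.eq_nil_of_forall_filter_pair_eq_nil hA hw h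
  | a :: t, b :: t', hw, hw', h => by
    have hab : a = b := by
      by_contra hab
      have := h a (hw a List.mem_cons_self) b (hw' b List.mem_cons_self) hab
      simp [hab] at this
    subst hab
    refine congrArg (a :: ·) (List.eq_of_forall_filter_pair_eq hA
      (fun x hx => hw x (List.mem_cons_of_mem a hx))
      (fun x hx => hw' x (List.mem_cons_of_mem a hx)) fun x hx y hy hxy => ?_)
    have := h x hx y hy hxy
    simp only [List.filter_cons] at this
    split_ifs at this
    · exact List.cons_injective this
    · exact this

end PairFilters

section IsTableau

variable {A : Finset ℕ} {T U : ℕ → List ℕ}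

lemma IsTableau.mem_erase_of_mem_row (hT : IsTableau A T) {i a : ℕ} (hi : i ∈ A)
    (ha : a ∈ T i) : a ∈ A.erase i :=
  Finset.mem_erase.2 ⟨(hT.1 i hi a ha).2, (hT.1 i hi a ha).1⟩

lemma IsTableau.restrictTab_insert_self (hT : IsTableau A T) {i : ℕ} (hi : i ∈ A)
    (s : Finset ℕ) : restrictTab (insert i s) T i = (T i).filter (· ∈ s) := by
  rw [restrictTab, if_pos (Finset.mem_insert_self i s)]
  refine List.filter_congr fun a ha => ?_
  simp [Finset.mem_insert, (hT.1 i hi a ha).2]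

lemma IsTableau.ext_of_forall_restrictTab_eq (hT : IsTableau A T) (hU : IsTableau A U)
    (hA : 3 ≤ A.card)
    (h : ∀ X ⊆ A, X.card = 3 → restrictTab X T = restrictTab X U) : T = U := by
  funext i
  by_cases hi : i ∈ A
  · have hA' : 2 ≤ (A.erase i).card := by rw [Finset.card_erase_of_mem hi]; omega
    refine List.eq_of_forall_filter_pair_eq hA' (fun _ => hT.mem_erase_of_mem_row hi)
      (fun _ => hU.mem_erase_of_mem_row hi) fun x hx y hy hxy => ?_
    obtain ⟨hxi, hx⟩ := Finset.mem_erase.1 hx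
    obtain ⟨hyi, hy⟩ := Finset.mem_erase.1 hy
    have hsub : insert i {x, y} ⊆ A := by
      simp [Finset.insert_subset_iff, hi, hx, hy]
    have hcard : (insert i {x, y} : Finset ℕ).card = 3 := by
      rw [Finset.card_insert_of_notMem (by simp [hxi.symm, hyi.symm]),
        Finset.card_pair hxy]
    rw [← hT.restrictTab_insert_self hi, ← hU.restrictTab_insert_self hi,
      h _ hsub hcard]
  · rw [hT.2 i hi, hU.2 i hi]

end IsTableau

/-- **Lemma.** A regular tableau on `[n]` is determined by its restriction
to `{1, 2, 3}`. -/
theorem regularTableau_ext (n : ℕ) (T U : ℕ → List ℕ)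
    (hT : IsRegularTableau (Finset.Icc 1 n) T) (hU : IsRegularTableau (Finset.Icc 1 n) U)
    (h : restrictTab {1, 2, 3} T = restrictTab {1, 2, 3} U) :
    T = U := by
  have hn : 4 ≤ n := by simpa using hT.2.1
  have h123 : ({1, 2, 3} : Finset ℕ) ⊆ Finset.Icc 1 n := by
    simp only [Finset.insert_subset_iff, Finset.singleton_subset_iff, Finset.mem_Icc]
    omega
  refine hT.1.ext_of_forall_restrictTab_eq hU.1 (by rw [Nat.card_Icc]; omega) fun X hX hX3 => ?_
  have hTX := hT.2.2 X _ hX h123 hX3 rfl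
  have hUX := hU.2.2 X _ hX h123 hX3 rfl
  rw [← h] at hUX
  exact restrictTab_eq_of_tabEquiv hTX hUX

end
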